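/- The space 𝔽 decomposes as the orthogonal direct sum 𝔽 = 𝔽₁ ⊕ v𝔽 ⊕ h𝔽, where 𝔽₁ = {F ∈ 𝔽 : F = F₃(F)}, v𝔽 = {F ∈ 𝔽 : hF = 0 and ω(F) = 0}, and h𝔽 = {F ∈ 𝔽 : F₁(F) = F₂(F) = 0}. The decomposition is invariant under the action on 𝔽 of every linear isometry A of V with A∘φ = φ∘A and Aξ = ξ, and the components of F ∈ 𝔽 are p₁(F) = F₃(F) in 𝔽₁, vF = F₁(F) + F₂(F) − 2F₃(F) in v𝔽, and hF in h𝔽. -/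
import Mathlib


open scoped BigOperators RealInnerProductSpace

noncomputable section

variable {V : Type*} [NormedAddCommGroup V] [InnerProductSpace ℝ V]

/-- A map `V → V → V → ℝ` linear in each of its three arguments. -/
def Trilinear (F : V → V → V → ℝ) : Prop :=
  (∀ y z, IsLinearMap ℝ fun x => F x y z) ∧
  (∀ x z, IsLinearMap ℝ fun y => F x y z) ∧
  (∀ x y, IsLinearMap ℝ fun z => F x y z)

/-- Almost contact metric structure `(φ, ξ, η, g)` on `V` with `dim V = 2n+1`. -/
def ACM (n : ℕ) (φ : V →ₗ[ℝ] V) (ξ : V) (η : V →ₗ[ℝ] ℝ) : Prop :=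
  Module.finrank ℝ V = 2 * n + 1 ∧
  (∀ x, φ (φ x) = -x + η x • ξ) ∧
  φ ξ = 0 ∧
  (∀ x, η (φ x) = 0) ∧
  ⟪ξ, ξ⟫ = 1 ∧
  (∀ x y, ⟪φ x, φ y⟫ = ⟪x, y⟫ - η x * η y)

/-- Membership in the space `𝔽` of trilinear forms with the symmetries (1). -/
def InF (φ : V →ₗ[ℝ] V) (ξ : V) (η : V →ₗ[ℝ] ℝ) (F : V → V → V → ℝ) : Prop :=
  Trilinear F ∧
  (∀ x y z, F x y z = -F x z y) ∧
  (∀ x y z, F x y z = -F x (φ y) (φ z) + η y * F x ξ z + η z * F x y ξ)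

/-- `h x = -φ²x`. -/
def hMap (φ : V →ₗ[ℝ] V) (x : V) : V := -φ (φ x)

/-- `hF(x,y,z) = F(hx,hy,hz)`. -/
def hF (φ : V →ₗ[ℝ] V) (F : V → V → V → ℝ) : V → V → V → ℝ :=
  fun x y z => F (hMap φ x) (hMap φ y) (hMap φ z)

def F1 (ξ : V) (η : V →ₗ[ℝ] ℝ) (F : V → V → V → ℝ) : V → V → V → ℝ :=
  fun x y z => η x * F ξ y z

def F2 (ξ : V) (η : V →ₗ[ℝ] ℝ) (F : V → V → V → ℝ) : V → V → V → ℝ :=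
  fun x y z => η y * F x ξ z - η z * F x ξ y

def F3 (ξ : V) (η : V →ₗ[ℝ] ℝ) (F : V → V → V → ℝ) : V → V → V → ℝ :=
  fun x y z => η x * η y * F ξ ξ z - η x * η z * F ξ ξ y

def F4 (φ : V →ₗ[ℝ] V) (ξ : V) (η : V →ₗ[ℝ] ℝ) (F : V → V → V → ℝ) : V → V → V → ℝ :=
  fun x y z => η y * F (φ x) ξ (φ z) - η z * F (φ x) ξ (φ y)

def F5 (ξ : V) (η : V →ₗ[ℝ] ℝ) (F : V → V → V → ℝ) : V → V → V → ℝ :=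
  fun x y z => η y * F z ξ x - η z * F y ξ x

def F6 (φ : V →ₗ[ℝ] V) (ξ : V) (η : V →ₗ[ℝ] ℝ) (F : V → V → V → ℝ) : V → V → V → ℝ :=
  fun x y z => η y * F (φ z) ξ (φ x) - η z * F (φ y) ξ (φ x)

/-- `f(F)(z) = Σᵢ F(eᵢ, eᵢ, z)`. -/
def fTr {ι : Type*} [Fintype ι] (e : OrthonormalBasis ι ℝ V) (F : V → V → V → ℝ) (z : V) : ℝ :=
  ∑ i, F (e i) (e i) z

/-- `f*(F)(z) = Σᵢ F(eᵢ, φ eᵢ, z)`. -/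
def fTrStar {ι : Type*} [Fintype ι] (φ : V →ₗ[ℝ] V) (e : OrthonormalBasis ι ℝ V)
    (F : V → V → V → ℝ) (z : V) : ℝ :=
  ∑ i, F (e i) (φ (e i)) z

/-- The inner product on `𝔽`: `⟨F,G⟩ = Σ_{i,j,k} F(eᵢ,eⱼ,e_k) G(eᵢ,eⱼ,e_k)`. -/
def innerF {ι : Type*} [Fintype ι] (e : OrthonormalBasis ι ℝ V) (F G : V → V → V → ℝ) : ℝ :=
  ∑ i, ∑ j, ∑ k, F (e i) (e j) (e k) * G (e i) (e j) (e k)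

def F7 (n : ℕ) {ι : Type*} [Fintype ι] (e : OrthonormalBasis ι ℝ V) (ξ : V) (η : V →ₗ[ℝ] ℝ)
    (F : V → V → V → ℝ) : V → V → V → ℝ :=
  fun x y z => (1 / (2 * (n : ℝ))) * fTr e F ξ * (η z * ⟪x, y⟫ - η y * ⟪x, z⟫)

def F8 (n : ℕ) (φ : V →ₗ[ℝ] V) {ι : Type*} [Fintype ι] (e : OrthonormalBasis ι ℝ V) (ξ : V)
    (η : V →ₗ[ℝ] ℝ) (F : V → V → V → ℝ) : V → V → V → ℝ :=
  fun x y z => -(1 / (2 * (n : ℝ))) * fTrStar φ e F ξ * (η z * ⟪x, φ y⟫ - η y * ⟪x, φ z⟫)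

def F9 (n : ℕ) (φ : V →ₗ[ℝ] V) {ι : Type*} [Fintype ι] (e : OrthonormalBasis ι ℝ V)
    (F : V → V → V → ℝ) : V → V → V → ℝ :=
  fun x y z => (1 / (2 * ((n : ℝ) - 1))) *
    (⟪hMap φ x, hMap φ y⟫ * fTr e F z - ⟪hMap φ x, hMap φ z⟫ * fTr e F y
      - ⟪x, φ y⟫ * fTr e F (φ z) + ⟪x, φ z⟫ * fTr e F (φ y))

def F10 (φ : V →ₗ[ℝ] V) (F : V → V → V → ℝ) : V → V → V → ℝ :=
  fun x y z => (1 / 2) * (F x y z + F (φ x) (φ y) z)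

def F11 (φ : V →ₗ[ℝ] V) (F : V → V → V → ℝ) : V → V → V → ℝ :=
  fun x y z => (1 / 6) * (F x y z + F y z x + F z x y
    - F (φ x) (φ y) z - F (φ y) (φ z) x - F (φ z) (φ x) y)

def F12 (φ : V →ₗ[ℝ] V) (F : V → V → V → ℝ) : V → V → V → ℝ :=
  fun x y z => (1 / 2) * (F x y z - F (φ x) (φ y) z)

/-- The action of a linear isometry `A` of `V` on trilinear forms:
`(A·F)(x,y,z) = F(A⁻¹x, A⁻¹y, A⁻¹z)`. -/
def actA (A : V ≃ₗᵢ[ℝ] V) (F : V → V → V → ℝ) : V → V → V → ℝ :=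
  fun x y z => F (A.symm x) (A.symm y) (A.symm z)

def L1 (ξ : V) (η : V →ₗ[ℝ] ℝ) (F : V → V → V → ℝ) : V → V → V → ℝ :=
  fun x y z => F x y z - 2 * F3 ξ η F x y z

def L2 (ξ : V) (η : V →ₗ[ℝ] ℝ) (F : V → V → V → ℝ) : V → V → V → ℝ :=
  fun x y z => F x y z - 2 * (F1 ξ η F x y z + F2 ξ η F x y z)

def L3 (ξ : V) (η : V →ₗ[ℝ] ℝ) (F : V → V → V → ℝ) : V → V → V → ℝ :=
  fun x y z => F2 ξ η F x y z - F1 ξ η F x y z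

def L4 (φ : V →ₗ[ℝ] V) (ξ : V) (η : V →ₗ[ℝ] ℝ) (F : V → V → V → ℝ) : V → V → V → ℝ :=
  fun x y z => -F4 φ ξ η F x y z

def L5 (ξ : V) (η : V →ₗ[ℝ] ℝ) (F : V → V → V → ℝ) : V → V → V → ℝ :=
  fun x y z => -F5 ξ η F x y z

def L6 (n : ℕ) {ι : Type*} [Fintype ι] (e : OrthonormalBasis ι ℝ V) (ξ : V) (η : V →ₗ[ℝ] ℝ)
    (F : V → V → V → ℝ) : V → V → V → ℝ :=
  fun x y z => F x y z - 2 * F7 n e ξ η F x y z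

def L7 (n : ℕ) (φ : V →ₗ[ℝ] V) {ι : Type*} [Fintype ι] (e : OrthonormalBasis ι ℝ V) (ξ : V)
    (η : V →ₗ[ℝ] ℝ) (F : V → V → V → ℝ) : V → V → V → ℝ :=
  fun x y z => F x y z - 2 * F8 n φ e ξ η F x y z

/-- The subspace `𝔽₁ = {F ∈ 𝔽 : F = F₃(F)}`. -/
def MemF1sub (φ : V →ₗ[ℝ] V) (ξ : V) (η : V →ₗ[ℝ] ℝ) (F : V → V → V → ℝ) : Prop :=
  InF φ ξ η F ∧ F = F3 ξ η F

/-- The subspace `v𝔽 = {F ∈ 𝔽 : hF = 0, ω(F) = 0}`. -/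
def MemVF (φ : V →ₗ[ℝ] V) (ξ : V) (η : V →ₗ[ℝ] ℝ) (F : V → V → V → ℝ) : Prop :=
  InF φ ξ η F ∧ hF φ F = 0 ∧ ∀ z, F ξ ξ z = 0

/-- The subspace `h𝔽 = {F ∈ 𝔽 : F₁(F) = F₂(F) = 0}`. -/
def MemHF (φ : V →ₗ[ℝ] V) (ξ : V) (η : V →ₗ[ℝ] ℝ) (F : V → V → V → ℝ) : Prop :=
  InF φ ξ η F ∧ F1 ξ η F = 0 ∧ F2 ξ η F = 0

/-- The subspace `(v𝔽)′ = {F ∈ 𝔽 : hF = 0, F(ξ,·,·) = 0}`. -/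
def MemVF' (φ : V →ₗ[ℝ] V) (ξ : V) (η : V →ₗ[ℝ] ℝ) (F : V → V → V → ℝ) : Prop :=
  InF φ ξ η F ∧ hF φ F = 0 ∧ ∀ y z, F ξ y z = 0

/-- The subspace `𝔽₈ = {F ∈ 𝔽 : hF = 0, F(·,·,ξ) = 0}`. -/
def MemF8sub (φ : V →ₗ[ℝ] V) (ξ : V) (η : V →ₗ[ℝ] ℝ) (F : V → V → V → ℝ) : Prop :=
  InF φ ξ η F ∧ hF φ F = 0 ∧ ∀ x y, F x y ξ = 0

/-- The subspace `𝒩 = {F ∈ (v𝔽)′ : F = F₄(F)}`. -/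
def MemN (φ : V →ₗ[ℝ] V) (ξ : V) (η : V →ₗ[ℝ] ℝ) (F : V → V → V → ℝ) : Prop :=
  MemVF' φ ξ η F ∧ F = F4 φ ξ η F

/-- The subspace `𝒩̃ = {F ∈ (v𝔽)′ : F = -F₄(F)}`. -/
def MemNt (φ : V →ₗ[ℝ] V) (ξ : V) (η : V →ₗ[ℝ] ℝ) (F : V → V → V → ℝ) : Prop :=
  MemVF' φ ξ η F ∧ F = -F4 φ ξ η F

/-- The subspace `𝒬𝒮𝔽 = {F ∈ (v𝔽)′ : F = F₄(F) = F₅(F)}`. -/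
def MemQS (φ : V →ₗ[ℝ] V) (ξ : V) (η : V →ₗ[ℝ] ℝ) (F : V → V → V → ℝ) : Prop :=
  MemVF' φ ξ η F ∧ F = F4 φ ξ η F ∧ F = F5 ξ η F

/-- The subspace `𝒬𝒦𝔽 = {F ∈ (v𝔽)′ : F = F₄(F) = -F₅(F)}`. -/
def MemQK (φ : V →ₗ[ℝ] V) (ξ : V) (η : V →ₗ[ℝ] ℝ) (F : V → V → V → ℝ) : Prop :=
  MemVF' φ ξ η F ∧ F = F4 φ ξ η F ∧ F = -F5 ξ η F

/-- The subspace `𝔽₆ = {F ∈ (v𝔽)′ : F = -F₄(F) = F₅(F)}`. -/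
def MemF6sub (φ : V →ₗ[ℝ] V) (ξ : V) (η : V →ₗ[ℝ] ℝ) (F : V → V → V → ℝ) : Prop :=
  MemVF' φ ξ η F ∧ F = -F4 φ ξ η F ∧ F = F5 ξ η F

/-- The subspace `𝔽₇ = {F ∈ (v𝔽)′ : F = -F₄(F) = -F₅(F)}`. -/
def MemF7sub (φ : V →ₗ[ℝ] V) (ξ : V) (η : V →ₗ[ℝ] ℝ) (F : V → V → V → ℝ) : Prop :=
  MemVF' φ ξ η F ∧ F = -F4 φ ξ η F ∧ F = -F5 ξ η F

/-- The subspace `𝔽₂ = {F ∈ 𝔽 : F = F₇(F)}`. -/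
def MemF2sub (n : ℕ) {ι : Type*} [Fintype ι] (e : OrthonormalBasis ι ℝ V) (φ : V →ₗ[ℝ] V)
    (ξ : V) (η : V →ₗ[ℝ] ℝ) (F : V → V → V → ℝ) : Prop :=
  InF φ ξ η F ∧ F = F7 n e ξ η F

/-- The subspace `𝔽₃ = {F ∈ 𝔽 : F = F₈(F)}`. -/
def MemF3sub (n : ℕ) {ι : Type*} [Fintype ι] (e : OrthonormalBasis ι ℝ V) (φ : V →ₗ[ℝ] V)
    (ξ : V) (η : V →ₗ[ℝ] ℝ) (F : V → V → V → ℝ) : Prop :=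
  InF φ ξ η F ∧ F = F8 n φ e ξ η F

/-- The subspace `𝔽₄ = {F ∈ 𝔽 : F = F₄(F) = F₅(F), f(F)(ξ) = 0}`. -/
def MemF4sub (n : ℕ) {ι : Type*} [Fintype ι] (e : OrthonormalBasis ι ℝ V) (φ : V →ₗ[ℝ] V)
    (ξ : V) (η : V →ₗ[ℝ] ℝ) (F : V → V → V → ℝ) : Prop :=
  InF φ ξ η F ∧ F = F4 φ ξ η F ∧ F = F5 ξ η F ∧ fTr e F ξ = 0

/-- The subspace `𝔽₅ = {F ∈ 𝔽 : F = F₄(F) = -F₅(F), f*(F)(ξ) = 0}`. -/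
def MemF5sub (n : ℕ) {ι : Type*} [Fintype ι] (e : OrthonormalBasis ι ℝ V) (φ : V →ₗ[ℝ] V)
    (ξ : V) (η : V →ₗ[ℝ] ℝ) (F : V → V → V → ℝ) : Prop :=
  InF φ ξ η F ∧ F = F4 φ ξ η F ∧ F = -F5 ξ η F ∧ fTrStar φ e F ξ = 0

/-- The subspace `𝔽₄ = {F ∈ (v𝔽)′ : F = F₄(F) = F₅(F), f(F)(ξ) = 0}`. -/
def MemF4sub' (n : ℕ) {ι : Type*} [Fintype ι] (e : OrthonormalBasis ι ℝ V) (φ : V →ₗ[ℝ] V)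
    (ξ : V) (η : V →ₗ[ℝ] ℝ) (F : V → V → V → ℝ) : Prop :=
  MemVF' φ ξ η F ∧ F = F4 φ ξ η F ∧ F = F5 ξ η F ∧ fTr e F ξ = 0

/-- The subspace `𝔽₅ = {F ∈ (v𝔽)′ : F = F₄(F) = -F₅(F), f*(F)(ξ) = 0}`. -/
def MemF5sub' (n : ℕ) {ι : Type*} [Fintype ι] (e : OrthonormalBasis ι ℝ V) (φ : V →ₗ[ℝ] V)
    (ξ : V) (η : V →ₗ[ℝ] ℝ) (F : V → V → V → ℝ) : Prop :=
  MemVF' φ ξ η F ∧ F = F4 φ ξ η F ∧ F = -F5 ξ η F ∧ fTrStar φ e F ξ = 0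

/-- The subspace `𝔽₉ = {F ∈ 𝔽 : F = hF = F₉(F)}`. -/
def MemF9sub (n : ℕ) {ι : Type*} [Fintype ι] (e : OrthonormalBasis ι ℝ V) (φ : V →ₗ[ℝ] V)
    (ξ : V) (η : V →ₗ[ℝ] ℝ) (F : V → V → V → ℝ) : Prop :=
  InF φ ξ η F ∧ F = hF φ F ∧ F = F9 n φ e F

/-- The subspace `𝔽₁₀ = {F ∈ 𝔽 : F = hF = F₁₀(F) - F₉(F)}`. -/
def MemF10sub (n : ℕ) {ι : Type*} [Fintype ι] (e : OrthonormalBasis ι ℝ V) (φ : V →ₗ[ℝ] V)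
    (ξ : V) (η : V →ₗ[ℝ] ℝ) (F : V → V → V → ℝ) : Prop :=
  InF φ ξ η F ∧ F = hF φ F ∧ F = F10 φ F - F9 n φ e F

/-- The subspace `𝔽₁₁ = {F ∈ 𝔽 : F = hF = F₁₁(F)}`. -/
def MemF11sub (φ : V →ₗ[ℝ] V) (ξ : V) (η : V →ₗ[ℝ] ℝ) (F : V → V → V → ℝ) : Prop :=
  InF φ ξ η F ∧ F = hF φ F ∧ F = F11 φ F

/-- The subspace `𝔽₁₂ = {F ∈ 𝔽 : F = hF = F₁₂(F) - F₁₁(F)}`. -/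
def MemF12sub (φ : V →ₗ[ℝ] V) (ξ : V) (η : V →ₗ[ℝ] ℝ) (F : V → V → V → ℝ) : Prop :=
  InF φ ξ η F ∧ F = hF φ F ∧ F = F12 φ F - F11 φ F

set_option linter.unusedVariables false
set_option linter.unusedSectionVars false
set_option maxHeartbeats 1000000

section AuxLemmas

variable {n : ℕ} {φ : V →ₗ[ℝ] V} {ξ : V} {η : V →ₗ[ℝ] ℝ} {F G : V → V → V → ℝ}

-- Trilinearity helpers
lemma t1add (hT : Trilinear F) (a b y z : V) : F (a + b) y z = F a y z + F b y z :=
  (hT.1 y z).map_add a b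
lemma t1smul (hT : Trilinear F) (c : ℝ) (a y z : V) : F (c • a) y z = c * F a y z := by
  simpa using (hT.1 y z).map_smul c a
lemma t1sub (hT : Trilinear F) (a b y z : V) : F (a - b) y z = F a y z - F b y z :=
  (hT.1 y z).map_sub a b
lemma t1zero (hT : Trilinear F) (y z : V) : F 0 y z = 0 :=
  (hT.1 y z).map_zero
lemma t2add (hT : Trilinear F) (x : V) (a b : V) (z : V) : F x (a + b) z = F x a z + F x b z :=
  (hT.2.1 x z).map_add a b
lemma t2smul (hT : Trilinear F) (x : V) (c : ℝ) (a z : V) : F x (c • a) z = c * F x a z := by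
  simpa using (hT.2.1 x z).map_smul c a
lemma t2sub (hT : Trilinear F) (x a b z : V) : F x (a - b) z = F x a z - F x b z :=
  (hT.2.1 x z).map_sub a b
lemma t2zero (hT : Trilinear F) (x z : V) : F x 0 z = 0 :=
  (hT.2.1 x z).map_zero
lemma t3add (hT : Trilinear F) (x y a b : V) : F x y (a + b) = F x y a + F x y b :=
  (hT.2.2 x y).map_add a b
lemma t3smul (hT : Trilinear F) (x y : V) (c : ℝ) (a : V) : F x y (c • a) = c * F x y a := by
  simpa using (hT.2.2 x y).map_smul c a
lemma t3sub (hT : Trilinear F) (x y a b : V) : F x y (a - b) = F x y a - F x y b :=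
  (hT.2.2 x y).map_sub a b
lemma t3zero (hT : Trilinear F) (x y : V) : F x y 0 = 0 :=
  (hT.2.2 x y).map_zero

lemma asym_self (hA : ∀ x y z, F x y z = -F x z y) (x y : V) : F x y y = 0 := by
  have := hA x y y; linarith

-- ACM consequences
lemma acm_eta_xi (hacm : ACM n φ ξ η) : η ξ = 1 := by
  obtain ⟨-, h2, h3, -, h5, -⟩ := hacm
  have h := h2 ξ
  rw [h3, map_zero, eq_comm, neg_add_eq_sub, sub_eq_zero] at h
  have hs : (η ξ - 1) • ξ = 0 := by
    rw [sub_smul, one_smul, h, sub_self]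
  rcases smul_eq_zero.mp hs with h' | h'
  · linarith [h']
  · rw [h', inner_zero_left] at h5; norm_num at h5

lemma acm_inner (hacm : ACM n φ ξ η) (x : V) : ⟪ξ, x⟫ = η x := by
  have h6 := hacm.2.2.2.2.2 x ξ
  rw [hacm.2.2.1, inner_zero_right, acm_eta_xi hacm, mul_one] at h6
  rw [real_inner_comm]
  linarith

lemma hMap_eq (hacm : ACM n φ ξ η) (x : V) : hMap φ x = x - η x • ξ := by
  show -φ (φ x) = _
  rw [hacm.2.1 x, neg_add, neg_neg, ← sub_eq_add_neg]

lemma eta_hMap (hacm : ACM n φ ξ η) (x : V) : η (hMap φ x) = 0 := by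
  rw [hMap_eq hacm, map_sub, map_smul, acm_eta_xi hacm, smul_eq_mul, mul_one, sub_self]

lemma hMap_xi (hacm : ACM n φ ξ η) : hMap φ ξ = 0 := by
  rw [hMap_eq hacm, acm_eta_xi hacm, one_smul, sub_self]

lemma phi_hMap (hacm : ACM n φ ξ η) (x : V) : φ (hMap φ x) = φ x := by
  rw [hMap_eq hacm, map_sub, map_smul, hacm.2.2.1, smul_zero, sub_zero]

lemma hMap_phi (hacm : ACM n φ ξ η) (x : V) : hMap φ (φ x) = φ x := by
  rw [hMap_eq hacm, hacm.2.2.2.1 x, zero_smul, sub_zero]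

lemma hMap_add (a b : V) : hMap φ (a + b) = hMap φ a + hMap φ b := by
  simp only [hMap, map_add, neg_add]

lemma hMap_smul (c : ℝ) (a : V) : hMap φ (c • a) = c • hMap φ a := by
  simp [hMap, map_smul]

lemma hF_expand (hacm : ACM n φ ξ η) (hT : Trilinear F) (x y z : V) :
    hF φ F x y z = F x y z - η x * F ξ y z - η y * F x ξ z - η z * F x y ξ
      + η x * η y * F ξ ξ z + η x * η z * F ξ y ξ + η y * η z * F x ξ ξ
      - η x * η y * η z * F ξ ξ ξ := by
  simp only [hF]
  rw [hMap_eq hacm x, hMap_eq hacm y, hMap_eq hacm z]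
  simp only [t1sub hT, t1smul hT, t2sub hT, t2smul hT, t3sub hT, t3smul hT]
  ring

lemma decomp_pt (hacm : ACM n φ ξ η) (hT : Trilinear F)
    (hA : ∀ x y z, F x y z = -F x z y) (x y z : V) :
    F x y z = F3 ξ η F x y z +
      (F1 ξ η F x y z + F2 ξ η F x y z - 2 * F3 ξ η F x y z) + hF φ F x y z := by
  rw [hF_expand hacm hT x y z]
  simp only [F1, F2, F3]
  rw [asym_self hA x ξ, asym_self hA ξ ξ, hA x y ξ, hA ξ y ξ]
  ring

lemma memF1_F3 (hacm : ACM n φ ξ η) (hFm : InF φ ξ η F) : MemF1sub φ ξ η (F3 ξ η F) := by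
  obtain ⟨hT, hA, hB⟩ := hFm
  have hz : F ξ ξ ξ = 0 := asym_self hA ξ ξ
  have hηξ := acm_eta_xi hacm
  have hηφ := hacm.2.2.2.1
  refine ⟨⟨⟨fun y z => ⟨fun a b => ?_, fun c a => ?_⟩,
      fun x z => ⟨fun a b => ?_, fun c a => ?_⟩,
      fun x y => ⟨fun a b => ?_, fun c a => ?_⟩⟩, ?_, ?_⟩, ?_⟩
  · simp only [F3, map_add, t1add hT, t2add hT, t3add hT]; ring
  · simp only [F3, map_smul, smul_eq_mul, t1smul hT, t2smul hT, t3smul hT]; ring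
  · simp only [F3, map_add, t1add hT, t2add hT, t3add hT]; ring
  · simp only [F3, map_smul, smul_eq_mul, t1smul hT, t2smul hT, t3smul hT]; ring
  · simp only [F3, map_add, t1add hT, t2add hT, t3add hT]; ring
  · simp only [F3, map_smul, smul_eq_mul, t1smul hT, t2smul hT, t3smul hT]; ring
  · intro x y z; simp only [F3]; ring
  · intro x y z
    simp only [F3]
    rw [hηφ y, hηφ z, hηξ, hz]
    ring
  · funext x y z
    simp only [F3]
    rw [hηξ, hz]
    ring

lemma memVF_comb (hacm : ACM n φ ξ η) (hFm : InF φ ξ η F) :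
    MemVF φ ξ η (fun x y z => F1 ξ η F x y z + F2 ξ η F x y z - 2 * F3 ξ η F x y z) := by
  obtain ⟨hT, hA, hB⟩ := hFm
  have hηξ := acm_eta_xi hacm
  have hηφ := hacm.2.2.2.1
  have z1 : F ξ ξ ξ = 0 := asym_self hA ξ ξ
  have z2 : ∀ x, F x ξ ξ = 0 := fun x => asym_self hA x ξ
  refine ⟨⟨⟨fun y z => ⟨fun a b => ?_, fun c a => ?_⟩,
      fun x z => ⟨fun a b => ?_, fun c a => ?_⟩,
      fun x y => ⟨fun a b => ?_, fun c a => ?_⟩⟩, ?_, ?_⟩, ?_, ?_⟩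
  · simp only [F1, F2, F3, map_add, t1add hT, t2add hT, t3add hT]; ring
  · simp only [F1, F2, F3, map_smul, smul_eq_mul, t1smul hT, t2smul hT, t3smul hT]; ring
  · simp only [F1, F2, F3, map_add, t1add hT, t2add hT, t3add hT]; ring
  · simp only [F1, F2, F3, map_smul, smul_eq_mul, t1smul hT, t2smul hT, t3smul hT]; ring
  · simp only [F1, F2, F3, map_add, t1add hT, t2add hT, t3add hT]; ring
  · simp only [F1, F2, F3, map_smul, smul_eq_mul, t1smul hT, t2smul hT, t3smul hT]; ring
  · intro x y z
    simp only [F1, F2, F3]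
    rw [hA ξ y z]
    ring
  · intro x y z
    simp only [F1, F2, F3]
    have hb : F ξ (φ y) (φ z) = -F ξ y z + η y * F ξ ξ z + η z * F ξ y ξ := by
      have := hB ξ y z; linarith
    rw [hηφ y, hηφ z, hηξ, hb, hA ξ y ξ, z2 x, z1]
    ring
  · funext x y z
    simp only [hF, F1, F2, F3, Pi.zero_apply]
    rw [eta_hMap hacm x, eta_hMap hacm y, eta_hMap hacm z]
    ring
  · intro z
    simp only [F1, F2, F3]
    rw [hηξ, z2 ξ]
    ring

lemma memHF_hF (hacm : ACM n φ ξ η) (hFm : InF φ ξ η F) : MemHF φ ξ η (hF φ F) := by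
  obtain ⟨hT, hA, hB⟩ := hFm
  refine ⟨⟨⟨fun y z => ⟨fun a b => ?_, fun c a => ?_⟩,
      fun x z => ⟨fun a b => ?_, fun c a => ?_⟩,
      fun x y => ⟨fun a b => ?_, fun c a => ?_⟩⟩, ?_, ?_⟩, ?_, ?_⟩
  · simp only [hF]; rw [hMap_add, t1add hT]
  · simp only [hF]; rw [hMap_smul, t1smul hT, smul_eq_mul]
  · simp only [hF]; rw [hMap_add, t2add hT]
  · simp only [hF]; rw [hMap_smul, t2smul hT, smul_eq_mul]
  · simp only [hF]; rw [hMap_add, t3add hT]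
  · simp only [hF]; rw [hMap_smul, t3smul hT, smul_eq_mul]
  · intro x y z
    simp only [hF]
    exact hA _ _ _
  · intro x y z
    simp only [hF]
    rw [hMap_phi hacm y, hMap_phi hacm z, hMap_xi hacm, t2zero hT, t3zero hT]
    have key := hB (hMap φ x) (hMap φ y) (hMap φ z)
    rw [phi_hMap hacm y, phi_hMap hacm z, eta_hMap hacm y, eta_hMap hacm z] at key
    linarith [key]
  · funext x y z
    simp only [F1, hF, Pi.zero_apply]
    rw [hMap_xi hacm, t1zero hT]
    ring
  · funext x y z
    simp only [F2, hF, Pi.zero_apply]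
    rw [hMap_xi hacm]
    rw [t2zero hT, t2zero hT]
    ring

lemma etaSumCollapse {ι : Type*} [Fintype ι] (e : OrthonormalBasis ι ℝ V)
    (hacm : ACM n φ ξ η) (α : V → ℝ) (hα : IsLinearMap ℝ α) :
    ∑ i, η (e i) * α (e i) = α ξ := by
  have hi : ∀ i, (⟪e i, ξ⟫ : ℝ) = η (e i) := fun i => by
    rw [← acm_inner hacm (e i), real_inner_comm]
  have key := congrArg (IsLinearMap.mk' α hα) (e.sum_repr' ξ)
  rw [map_sum] at key
  simp only [map_smul, smul_eq_mul, IsLinearMap.mk'_apply] at key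
  rw [← key]
  exact Finset.sum_congr rfl fun i _ => by rw [hi i]

lemma collapse1 {ι : Type*} [Fintype ι] (e : OrthonormalBasis ι ℝ V)
    (hacm : ACM n φ ξ η) (hT : Trilinear G) (y z : V) :
    ∑ i, η (e i) * G (e i) y z = G ξ y z :=
  etaSumCollapse e hacm _ (hT.1 y z)

lemma collapse2 {ι : Type*} [Fintype ι] (e : OrthonormalBasis ι ℝ V)
    (hacm : ACM n φ ξ η) (hT : Trilinear G) (x z : V) :
    ∑ j, η (e j) * G x (e j) z = G x ξ z :=
  etaSumCollapse e hacm _ (hT.2.1 x z)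

lemma collapse3 {ι : Type*} [Fintype ι] (e : OrthonormalBasis ι ℝ V)
    (hacm : ACM n φ ξ η) (hT : Trilinear G) (x y : V) :
    ∑ k, η (e k) * G x y (e k) = G x y ξ :=
  etaSumCollapse e hacm _ (hT.2.2 x y)

lemma orth1 {ι : Type*} [Fintype ι] (e : OrthonormalBasis ι ℝ V) (hacm : ACM n φ ξ η)
    (hTG : Trilinear G) (hAG : ∀ x y z, G x y z = -G x z y)
    (hGv : ∀ z, G ξ ξ z = 0)
    (hFe : ∀ x y z, F x y z = η x * η y * F ξ ξ z - η x * η z * F ξ ξ y) :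
    innerF e F G = 0 := by
  have step1 : ∀ i j, (∑ k, F (e i) (e j) (e k) * G (e i) (e j) (e k)) =
      η (e i) * η (e j) * (∑ k, F ξ ξ (e k) * G (e i) (e j) (e k))
      - η (e i) * F ξ ξ (e j) * G (e i) (e j) ξ := by
    intro i j
    calc (∑ k, F (e i) (e j) (e k) * G (e i) (e j) (e k))
        = ∑ k, (η (e i) * η (e j) * (F ξ ξ (e k) * G (e i) (e j) (e k))
            - η (e i) * F ξ ξ (e j) * (η (e k) * G (e i) (e j) (e k))) :=
          Finset.sum_congr rfl fun k _ => by rw [hFe (e i) (e j) (e k)]; ring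
      _ = η (e i) * η (e j) * (∑ k, F ξ ξ (e k) * G (e i) (e j) (e k))
            - η (e i) * F ξ ξ (e j) * (∑ k, η (e k) * G (e i) (e j) (e k)) := by
          rw [Finset.sum_sub_distrib, ← Finset.mul_sum, ← Finset.mul_sum]
      _ = _ := by rw [collapse3 e hacm hTG]
  have hlin2 : ∀ i, IsLinearMap ℝ (fun y => ∑ k, F ξ ξ (e k) * G (e i) y (e k)) := by
    intro i
    refine ⟨fun a b => ?_, fun c a => ?_⟩
    · simp only [t2add hTG, mul_add, Finset.sum_add_distrib]
    · simp only [t2smul hTG, smul_eq_mul, Finset.mul_sum]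
      exact Finset.sum_congr rfl fun k _ => by ring
  have key2 : ∀ i, (∑ j, η (e j) * (∑ k, F ξ ξ (e k) * G (e i) (e j) (e k)))
      = ∑ k, F ξ ξ (e k) * G (e i) ξ (e k) := by
    intro i
    simpa using etaSumCollapse e hacm _ (hlin2 i)
  have step2 : ∀ i, (∑ j, (η (e i) * η (e j) * (∑ k, F ξ ξ (e k) * G (e i) (e j) (e k))
      - η (e i) * F ξ ξ (e j) * G (e i) (e j) ξ)) =
      η (e i) * ((∑ k, F ξ ξ (e k) * G (e i) ξ (e k))
        - ∑ j, F ξ ξ (e j) * G (e i) (e j) ξ) := by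
    intro i
    rw [Finset.sum_sub_distrib]
    rw [mul_sub]
    congr 1
    · rw [← key2 i, Finset.mul_sum]
      exact Finset.sum_congr rfl fun j _ => by ring
    · rw [Finset.mul_sum]
      exact Finset.sum_congr rfl fun j _ => by ring
  have hlin3 : IsLinearMap ℝ (fun x => (∑ k, F ξ ξ (e k) * G x ξ (e k))
      - ∑ j, F ξ ξ (e j) * G x (e j) ξ) := by
    refine ⟨fun a b => ?_, fun c a => ?_⟩
    · simp only [t1add hTG, mul_add, Finset.sum_add_distrib]; ring
    · simp only [t1smul hTG, smul_eq_mul, mul_sub, Finset.mul_sum]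
      congr 1 <;> exact Finset.sum_congr rfl fun j _ => by ring
  have key3 : (∑ i, η (e i) * ((∑ k, F ξ ξ (e k) * G (e i) ξ (e k))
        - ∑ j, F ξ ξ (e j) * G (e i) (e j) ξ))
      = (∑ k, F ξ ξ (e k) * G ξ ξ (e k)) - ∑ j, F ξ ξ (e j) * G ξ (e j) ξ := by
    simpa using etaSumCollapse e hacm _ hlin3
  have hz2 : ∀ j, G ξ (e j) ξ = 0 := fun j => by
    have := hAG ξ (e j) ξ
    rw [hGv (e j)] at this
    linarith
  calc innerF e F G = ∑ i, ∑ j, (η (e i) * η (e j) * (∑ k, F ξ ξ (e k) * G (e i) (e j) (e k))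
          - η (e i) * F ξ ξ (e j) * G (e i) (e j) ξ) := by
        unfold innerF
        exact Finset.sum_congr rfl fun i _ => Finset.sum_congr rfl fun j _ => step1 i j
    _ = ∑ i, η (e i) * ((∑ k, F ξ ξ (e k) * G (e i) ξ (e k))
          - ∑ j, F ξ ξ (e j) * G (e i) (e j) ξ) :=
        Finset.sum_congr rfl fun i _ => step2 i
    _ = (∑ k, F ξ ξ (e k) * G ξ ξ (e k)) - ∑ j, F ξ ξ (e j) * G ξ (e j) ξ := key3
    _ = 0 := by simp [hGv, hz2]

lemma orth2 {ι : Type*} [Fintype ι] (e : OrthonormalBasis ι ℝ V) (hacm : ACM n φ ξ η)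
    (hTG : Trilinear G)
    (hG1 : ∀ y z, G ξ y z = 0) (hG2 : ∀ x z, G x ξ z = 0) (hG3 : ∀ x y, G x y ξ = 0)
    (hFe : ∀ x y z, F x y z = η x * F ξ y z + η y * F x ξ z - η z * F x ξ y) :
    innerF e F G = 0 := by
  have step1 : ∀ i j, (∑ k, F (e i) (e j) (e k) * G (e i) (e j) (e k)) =
      η (e i) * (∑ k, F ξ (e j) (e k) * G (e i) (e j) (e k))
      + η (e j) * (∑ k, F (e i) ξ (e k) * G (e i) (e j) (e k)) := by
    intro i j
    calc (∑ k, F (e i) (e j) (e k) * G (e i) (e j) (e k))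
        = ∑ k, (η (e i) * (F ξ (e j) (e k) * G (e i) (e j) (e k))
            + η (e j) * (F (e i) ξ (e k) * G (e i) (e j) (e k))
            - F (e i) ξ (e j) * (η (e k) * G (e i) (e j) (e k))) :=
          Finset.sum_congr rfl fun k _ => by rw [hFe (e i) (e j) (e k)]; ring
      _ = (∑ k, (η (e i) * (F ξ (e j) (e k) * G (e i) (e j) (e k))
            + η (e j) * (F (e i) ξ (e k) * G (e i) (e j) (e k))))
            - F (e i) ξ (e j) * (∑ k, η (e k) * G (e i) (e j) (e k)) := by
          rw [Finset.sum_sub_distrib, ← Finset.mul_sum]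
      _ = (∑ k, (η (e i) * (F ξ (e j) (e k) * G (e i) (e j) (e k))
            + η (e j) * (F (e i) ξ (e k) * G (e i) (e j) (e k)))) := by
          rw [collapse3 e hacm hTG, hG3, mul_zero, sub_zero]
      _ = _ := by
          rw [Finset.sum_add_distrib, ← Finset.mul_sum, ← Finset.mul_sum]
  have hlin2 : ∀ i, IsLinearMap ℝ (fun y => ∑ k, F (e i) ξ (e k) * G (e i) y (e k)) := by
    intro i
    refine ⟨fun a b => ?_, fun c a => ?_⟩
    · simp only [t2add hTG, mul_add, Finset.sum_add_distrib]
    · simp only [t2smul hTG, smul_eq_mul, Finset.mul_sum]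
      exact Finset.sum_congr rfl fun k _ => by ring
  have key2 : ∀ i, (∑ j, η (e j) * (∑ k, F (e i) ξ (e k) * G (e i) (e j) (e k)))
      = ∑ k, F (e i) ξ (e k) * G (e i) ξ (e k) := by
    intro i
    simpa using etaSumCollapse e hacm _ (hlin2 i)
  have step2 : ∀ i, (∑ j, (η (e i) * (∑ k, F ξ (e j) (e k) * G (e i) (e j) (e k))
      + η (e j) * (∑ k, F (e i) ξ (e k) * G (e i) (e j) (e k)))) =
      η (e i) * (∑ j, ∑ k, F ξ (e j) (e k) * G (e i) (e j) (e k)) := by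
    intro i
    rw [Finset.sum_add_distrib, ← Finset.mul_sum, key2 i]
    have : (∑ k, F (e i) ξ (e k) * G (e i) ξ (e k)) = 0 := by
      simp [hG2]
    rw [this, add_zero]
  have hlin3 : IsLinearMap ℝ (fun x => ∑ j, ∑ k, F ξ (e j) (e k) * G x (e j) (e k)) := by
    refine ⟨fun a b => ?_, fun c a => ?_⟩
    · simp only [t1add hTG, mul_add, Finset.sum_add_distrib]
    · simp only [t1smul hTG, smul_eq_mul, Finset.mul_sum]
      exact Finset.sum_congr rfl fun j _ => Finset.sum_congr rfl fun k _ => by ring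
  have key3 : (∑ i, η (e i) * (∑ j, ∑ k, F ξ (e j) (e k) * G (e i) (e j) (e k)))
      = ∑ j, ∑ k, F ξ (e j) (e k) * G ξ (e j) (e k) := by
    simpa using etaSumCollapse e hacm _ hlin3
  calc innerF e F G
      = ∑ i, (η (e i) * (∑ j, ∑ k, F ξ (e j) (e k) * G (e i) (e j) (e k))) := by
        unfold innerF
        refine Finset.sum_congr rfl fun i _ => ?_
        rw [← step2 i]
        exact Finset.sum_congr rfl fun j _ => step1 i j
    _ = ∑ j, ∑ k, F ξ (e j) (e k) * G ξ (e j) (e k) := key3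
    _ = 0 := by simp [hG1]

-- Invariance under isometries
variable {A : V ≃ₗᵢ[ℝ] V}

lemma A_eta (hacm : ACM n φ ξ η) (hAξ : A ξ = ξ) (x : V) : η (A x) = η x := by
  rw [← acm_inner hacm (A x), ← acm_inner hacm x]
  conv_lhs => rw [← hAξ]
  exact A.inner_map_map ξ x

lemma A_symm_xi (hAξ : A ξ = ξ) : A.symm ξ = ξ :=
  A.symm_apply_eq.mpr hAξ.symm

lemma A_symm_eta (hacm : ACM n φ ξ η) (hAξ : A ξ = ξ) (x : V) : η (A.symm x) = η x := by
  have := A_eta hacm hAξ (A.symm x)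
  rw [A.apply_symm_apply] at this
  exact this.symm

lemma A_symm_phi (hAφ : ∀ x, A (φ x) = φ (A x)) (x : V) : φ (A.symm x) = A.symm (φ x) := by
  have := hAφ (A.symm x)
  rw [A.apply_symm_apply] at this
  rw [← this, A.symm_apply_apply]

lemma A_symm_h (hacm : ACM n φ ξ η) (hAξ : A ξ = ξ) (x : V) :
    hMap φ (A.symm x) = A.symm (hMap φ x) := by
  rw [hMap_eq hacm, hMap_eq hacm, map_sub, map_smul, A_symm_eta hacm hAξ, A_symm_xi hAξ]

lemma inF_actA (hacm : ACM n φ ξ η) (hAφ : ∀ x, A (φ x) = φ (A x)) (hAξ : A ξ = ξ)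
    (hFm : InF φ ξ η F) : InF φ ξ η (actA A F) := by
  obtain ⟨hT, hA, hB⟩ := hFm
  refine ⟨⟨fun y z => ⟨fun a b => ?_, fun c a => ?_⟩,
      fun x z => ⟨fun a b => ?_, fun c a => ?_⟩,
      fun x y => ⟨fun a b => ?_, fun c a => ?_⟩⟩, ?_, ?_⟩
  · simp only [actA, map_add, t1add hT]
  · simp only [actA, map_smul, t1smul hT, smul_eq_mul]
  · simp only [actA, map_add, t2add hT]
  · simp only [actA, map_smul, t2smul hT, smul_eq_mul]
  · simp only [actA, map_add, t3add hT]
  · simp only [actA, map_smul, t3smul hT, smul_eq_mul]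
  · intro x y z
    simp only [actA]
    exact hA _ _ _
  · intro x y z
    simp only [actA]
    have key := hB (A.symm x) (A.symm y) (A.symm z)
    rw [A_symm_eta hacm hAξ y, A_symm_eta hacm hAξ z,
      A_symm_phi hAφ y, A_symm_phi hAφ z] at key
    rw [A_symm_xi hAξ]
    exact key

lemma memF1_actA (hacm : ACM n φ ξ η) (hAφ : ∀ x, A (φ x) = φ (A x)) (hAξ : A ξ = ξ)
    (hFm : MemF1sub φ ξ η F) : MemF1sub φ ξ η (actA A F) := by
  obtain ⟨hInF, hFe⟩ := hFm
  refine ⟨inF_actA hacm hAφ hAξ hInF, ?_⟩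
  have hFe' : ∀ x y z, F x y z = η x * η y * F ξ ξ z - η x * η z * F ξ ξ y := fun x y z => by
    have := congrFun (congrFun (congrFun hFe x) y) z
    simpa [F3] using this
  funext x y z
  simp only [actA, F3]
  rw [A_symm_xi hAξ, hFe' (A.symm x) (A.symm y) (A.symm z),
    A_symm_eta hacm hAξ, A_symm_eta hacm hAξ, A_symm_eta hacm hAξ]

lemma memVF_actA (hacm : ACM n φ ξ η) (hAφ : ∀ x, A (φ x) = φ (A x)) (hAξ : A ξ = ξ)
    (hFm : MemVF φ ξ η F) : MemVF φ ξ η (actA A F) := by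
  obtain ⟨hInF, hhF, hω⟩ := hFm
  refine ⟨inF_actA hacm hAφ hAξ hInF, ?_, ?_⟩
  · funext x y z
    simp only [hF, actA, Pi.zero_apply]
    rw [← A_symm_h hacm hAξ x, ← A_symm_h hacm hAξ y, ← A_symm_h hacm hAξ z]
    have := congrFun (congrFun (congrFun hhF (A.symm x)) (A.symm y)) (A.symm z)
    simpa [hF] using this
  · intro z
    simp only [actA]
    rw [A_symm_xi hAξ]
    exact hω (A.symm z)

lemma memHF_actA (hacm : ACM n φ ξ η) (hAφ : ∀ x, A (φ x) = φ (A x)) (hAξ : A ξ = ξ)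
    (hFm : MemHF φ ξ η F) : MemHF φ ξ η (actA A F) := by
  obtain ⟨hInF, h1, h2⟩ := hFm
  have hηξ := acm_eta_xi hacm
  have hAs := hInF.2.1
  have hG1 : ∀ y z, F ξ y z = 0 := fun y z => by
    have := congrFun (congrFun (congrFun h1 ξ) y) z
    simpa [F1, hηξ] using this
  have hG2 : ∀ x z, F x ξ z = 0 := fun x z => by
    have := congrFun (congrFun (congrFun h2 x) ξ) z
    simp only [F2, Pi.zero_apply, hηξ, one_mul] at this
    rw [asym_self hAs x ξ, mul_zero, sub_zero] at this
    exact this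
  refine ⟨inF_actA hacm hAφ hAξ hInF, ?_, ?_⟩
  · funext x y z
    simp only [F1, actA, Pi.zero_apply, A_symm_xi hAξ]
    rw [hG1]
    ring
  · funext x y z
    simp only [F2, actA, Pi.zero_apply, A_symm_xi hAξ]
    rw [hG2, hG2]
    ring

end AuxLemmas
theorem stmt10 (n : ℕ) (φ : V →ₗ[ℝ] V) (ξ : V) (η : V →ₗ[ℝ] ℝ)
    (hacm : ACM n φ ξ η) (e : OrthonormalBasis (Fin (2 * n + 1)) ℝ V) :
    (∀ F, InF φ ξ η F →
      MemF1sub φ ξ η (F3 ξ η F) ∧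
      MemVF φ ξ η
        (fun x y z => F1 ξ η F x y z + F2 ξ η F x y z - 2 * F3 ξ η F x y z) ∧
      MemHF φ ξ η (hF φ F) ∧
      ∀ x y z, F x y z = F3 ξ η F x y z +
        (F1 ξ η F x y z + F2 ξ η F x y z - 2 * F3 ξ η F x y z) + hF φ F x y z) ∧
    (∀ F, InF φ ξ η F →
      ∃! p : (V → V → V → ℝ) × (V → V → V → ℝ) × (V → V → V → ℝ),
        MemF1sub φ ξ η p.1 ∧ MemVF φ ξ η p.2.1 ∧ MemHF φ ξ η p.2.2 ∧
          F = p.1 + p.2.1 + p.2.2) ∧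
    (∀ F G, MemF1sub φ ξ η F → MemVF φ ξ η G → innerF e F G = 0) ∧
    (∀ F G, MemF1sub φ ξ η F → MemHF φ ξ η G → innerF e F G = 0) ∧
    (∀ F G, MemVF φ ξ η F → MemHF φ ξ η G → innerF e F G = 0) ∧
    (∀ A : V ≃ₗᵢ[ℝ] V, (∀ x, A (φ x) = φ (A x)) → A ξ = ξ →
      (∀ F, MemF1sub φ ξ η F → MemF1sub φ ξ η (actA A F)) ∧
      (∀ F, MemVF φ ξ η F → MemVF φ ξ η (actA A F)) ∧
      (∀ F, MemHF φ ξ η F → MemHF φ ξ η (actA A F))) := by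
  have hηξ := acm_eta_xi hacm
  refine ⟨?_, ?_, ?_, ?_, ?_, ?_⟩
  · -- part 1: existence of the decomposition
    intro F hFm
    exact ⟨memF1_F3 hacm hFm, memVF_comb hacm hFm, memHF_hF hacm hFm,
      decomp_pt hacm hFm.1 hFm.2.1⟩
  · -- part 2: uniqueness
    intro F hFm
    refine ⟨⟨F3 ξ η F, fun x y z => F1 ξ η F x y z + F2 ξ η F x y z - 2 * F3 ξ η F x y z,
      hF φ F⟩,
      ⟨memF1_F3 hacm hFm, memVF_comb hacm hFm, memHF_hF hacm hFm, ?_⟩, ?_⟩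
    · funext x y z
      simp only [Pi.add_apply]
      exact decomp_pt hacm hFm.1 hFm.2.1 x y z
    · rintro ⟨p1, p2, p3⟩ ⟨hm1, hm2, hm3, hsum⟩
      obtain ⟨⟨hTp1, hAp1, hBp1⟩, hp1e⟩ := hm1
      obtain ⟨⟨hTp2, hAp2, hBp2⟩, hp2h, hp2ω⟩ := hm2
      obtain ⟨⟨hTp3, hAp3, hBp3⟩, hp3F1, hp3F2⟩ := hm3
      dsimp only at hsum hp1e hp2h hp2ω hp3F1 hp3F2 hTp1 hAp1 hBp1 hTp2 hAp2 hBp2 hTp3 hAp3 hBp3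
      have hFpt : ∀ x y z, F x y z = p1 x y z + p2 x y z + p3 x y z := fun x y z => by
        rw [hsum]; simp [Pi.add_apply]
      have hp1pt : ∀ x y z, p1 x y z = η x * η y * p1 ξ ξ z - η x * η z * p1 ξ ξ y :=
        fun x y z => by
          have := congrFun (congrFun (congrFun hp1e x) y) z
          simpa [F3] using this
      have hp3a : ∀ y z, p3 ξ y z = 0 := fun y z => by
        have := congrFun (congrFun (congrFun hp3F1 ξ) y) z
        simpa [F1, hηξ] using this
      have hp3b : ∀ x z, p3 x ξ z = 0 := fun x z => by
        have := congrFun (congrFun (congrFun hp3F2 x) ξ) z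
        simp only [F2, Pi.zero_apply, hηξ, one_mul] at this
        rw [asym_self hAp3 x ξ, mul_zero, sub_zero] at this
        exact this
      have hp3c : ∀ x y, p3 x y ξ = 0 := fun x y => by
        rw [hAp3 x y ξ, hp3b x y, neg_zero]
      have e1 : p1 = F3 ξ η F := by
        funext x y z
        have hz1 : F ξ ξ z = p1 ξ ξ z := by
          rw [hFpt ξ ξ z, hp2ω z, hp3a ξ z]; ring
        have hz2 : F ξ ξ y = p1 ξ ξ y := by
          rw [hFpt ξ ξ y, hp2ω y, hp3a ξ y]; ring
        simp only [F3]
        rw [hz1, hz2]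
        exact hp1pt x y z
      have e3 : p3 = hF φ F := by
        funext x y z
        have h1 : hF φ F x y z = hF φ p1 x y z + hF φ p2 x y z + hF φ p3 x y z := by
          simp only [hF]; exact hFpt _ _ _
        have h2 : hF φ p1 x y z = 0 := by
          simp only [hF]
          rw [hp1pt, eta_hMap hacm x]; ring
        have h3 : hF φ p2 x y z = 0 := by
          have := congrFun (congrFun (congrFun hp2h x) y) z
          simpa using this
        have h4 : hF φ p3 x y z = p3 x y z := by
          simp only [hF]
          rw [hMap_eq hacm x, hMap_eq hacm y, hMap_eq hacm z]
          simp only [t1sub hTp3, t1smul hTp3, t2sub hTp3, t2smul hTp3, t3sub hTp3,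
            t3smul hTp3, hp3a, hp3b, hp3c]
          ring
        rw [h1, h2, h3, h4]; ring
      have e2 : p2 = fun x y z => F1 ξ η F x y z + F2 ξ η F x y z - 2 * F3 ξ η F x y z := by
        funext x y z
        have hd := decomp_pt hacm hFm.1 hFm.2.1 x y z
        have h1 := congrFun (congrFun (congrFun e1 x) y) z
        have h3 := congrFun (congrFun (congrFun e3 x) y) z
        have hf := hFpt x y z
        linarith
      simp only [Prod.mk.injEq]
      exact ⟨e1, e2, e3⟩
  · -- F1 ⊥ vF
    intro F G hFm hGm
    obtain ⟨hInF, hFe⟩ := hFm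
    obtain ⟨⟨hTG, hAG, hBG⟩, hGh, hGω⟩ := hGm
    refine orth1 e hacm hTG hAG hGω ?_
    intro x y z
    have := congrFun (congrFun (congrFun hFe x) y) z
    simpa [F3] using this
  · -- F1 ⊥ hF
    intro F G hFm hGm
    obtain ⟨hInF, hFe⟩ := hFm
    obtain ⟨⟨hTG, hAG, hBG⟩, hG1', hG2'⟩ := hGm
    have hGv : ∀ z, G ξ ξ z = 0 := fun z => by
      have := congrFun (congrFun (congrFun hG1' ξ) ξ) z
      simpa [F1, hηξ] using this
    refine orth1 e hacm hTG hAG hGv ?_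
    intro x y z
    have := congrFun (congrFun (congrFun hFe x) y) z
    simpa [F3] using this
  · -- vF ⊥ hF
    intro F G hFm hGm
    obtain ⟨⟨hTF, hAF, hBF⟩, hFh, hFω⟩ := hFm
    obtain ⟨⟨hTG, hAG, hBG⟩, hG1', hG2'⟩ := hGm
    have hG1 : ∀ y z, G ξ y z = 0 := fun y z => by
      have := congrFun (congrFun (congrFun hG1' ξ) y) z
      simpa [F1, hηξ] using this
    have hG2 : ∀ x z, G x ξ z = 0 := fun x z => by
      have := congrFun (congrFun (congrFun hG2' x) ξ) z
      simp only [F2, Pi.zero_apply, hηξ, one_mul] at this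
      rw [asym_self hAG x ξ, mul_zero, sub_zero] at this
      exact this
    have hG3 : ∀ x y, G x y ξ = 0 := fun x y => by
      rw [hAG x y ξ, hG2 x y, neg_zero]
    refine orth2 e hacm hTG hG1 hG2 hG3 ?_
    intro x y z
    have hd := decomp_pt hacm ⟨hTF.1, hTF.2⟩ hAF x y z
    have h0 : hF φ F x y z = 0 := by
      have := congrFun (congrFun (congrFun hFh x) y) z
      simpa using this
    simp only [F1, F2, F3] at hd
    rw [hFω z, hFω y] at hd
    linarith
  · -- invariance
    intro A hAφ hAξ
    exact ⟨fun F hFm => memF1_actA hacm hAφ hAξ hFm,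
      fun F hFm => memVF_actA hacm hAφ hAξ hFm,
      fun F hFm => memHF_actA hacm hAφ hAξ hFm⟩
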